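/- Let P be a finite poset with e(P−x) > 0, x a minimal element of P, Q a finite poset with n' elements and e(Q−y) > 0 for a minimal element y of Q, and let R = Q <_x P with z = y. Then ρ(R,z) = ρ(Q,y)·(1 + 1/(n'−1 + ρ(P,x))), where ρ(S,s) := e(S)/e(S−s). -/

import Mathlib

/-- The number of linear extensions of the finite poset `(α, O)`. -/
noncomputable def eCount (α : Type) [Fintype α] (O : PartialOrder α) : ℕ :=
  Nat.card {f : α ≃ Fin (Fintype.card α) // ∀ a b : α, O.le a b → f a ≤ f b}

/-- The induced order on `P − x`. -/
def delOrder {α : Type} (O : PartialOrder α) (x : α) : PartialOrder {a : α // a ≠ x} where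
  le a b := O.le a.1 b.1
  lt a b := O.le a.1 b.1 ∧ ¬ O.le b.1 a.1
  lt_iff_le_not_ge := fun _ _ => Iff.rfl
  le_refl a := O.le_refl a.1
  le_trans a b c := O.le_trans a.1 b.1 c.1
  le_antisymm a b h h' := Subtype.ext (O.le_antisymm a.1 b.1 h h')

/-- The number of linear extensions of `P − x`. -/
noncomputable def eDel (α : Type) [Fintype α] [DecidableEq α] (O : PartialOrder α) (x : α) : ℕ :=
  eCount {a : α // a ≠ x} (delOrder O x)

/-- `x` is a minimal element of the poset `(α, O)`. -/
def isMinimal {α : Type} (O : PartialOrder α) (x : α) : Prop :=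
  ∀ a : α, O.le a x → a = x

/-- The width of a finite poset: the maximal size of an antichain. -/
noncomputable def pwidth (α : Type) [Fintype α] (O : PartialOrder α) : ℕ :=
  sSup {n : ℕ | ∃ s : Finset α,
    (∀ a ∈ s, ∀ b ∈ s, a ≠ b → ¬ O.le a b) ∧ s.card = n}

/-- The underlying relation of the linear (ordinal) sum `P <| Q`:
elements of `α` are below all elements of `β`. -/
def linLE {α β : Type} (O : PartialOrder α) (O' : PartialOrder β) :
    α ⊕ β → α ⊕ β → Prop
  | .inl a, .inl a' => O.le a a'
  | .inr b, .inr b' => O'.le b b'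
  | .inl _, .inr _ => True
  | .inr _, .inl _ => False

/-- The linear (ordinal) sum `P <| Q`. -/
def linOrder {α β : Type} (O : PartialOrder α) (O' : PartialOrder β) :
    PartialOrder (α ⊕ β) where
  le := linLE O O'
  lt a b := linLE O O' a b ∧ ¬ linLE O O' b a
  lt_iff_le_not_ge := fun _ _ => Iff.rfl
  le_refl := by
    rintro (a | b)
    · exact O.le_refl a
    · exact O'.le_refl b
  le_trans := by
    rintro (a | a) (b | b) (c | c) h h' <;>
      first
        | exact h.elim
        | exact h'.elim
        | trivial
        | exact O.le_trans _ _ _ h h'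
        | exact O'.le_trans _ _ _ h h'
  le_antisymm := by
    rintro (a | a) (b | b) h h' <;>
      first
        | exact h.elim
        | exact h'.elim
        | exact congrArg Sum.inl (O.le_antisymm _ _ h h')
        | exact congrArg Sum.inr (O'.le_antisymm _ _ h h')

/-- The relation of the parallel (disjoint) sum `P ⊕ Q`. -/
def parLE {α β : Type} (O : PartialOrder α) (O' : PartialOrder β) :
    α ⊕ β → α ⊕ β → Prop
  | .inl a, .inl a' => O.le a a'
  | .inr b, .inr b' => O'.le b b'
  | .inl _, .inr _ => False
  | .inr _, .inl _ => False

/-- The parallel (disjoint) sum `P ⊕ Q`. -/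
def parOrder {α β : Type} (O : PartialOrder α) (O' : PartialOrder β) :
    PartialOrder (α ⊕ β) where
  le := parLE O O'
  lt a b := parLE O O' a b ∧ ¬ parLE O O' b a
  lt_iff_le_not_ge := fun _ _ => Iff.rfl
  le_refl := by
    rintro (a | b)
    · exact O.le_refl a
    · exact O'.le_refl b
  le_trans := by
    rintro (a | a) (b | b) (c | c) h h' <;>
      first
        | exact h.elim
        | exact h'.elim
        | exact O.le_trans _ _ _ h h'
        | exact O'.le_trans _ _ _ h h'
  le_antisymm := by
    rintro (a | a) (b | b) h h' <;>
      first
        | exact h.elim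
        | exact h'.elim
        | exact congrArg Sum.inl (O.le_antisymm _ _ h h')
        | exact congrArg Sum.inr (O'.le_antisymm _ _ h h')

/-- The dual order. -/
def dualOrder {α : Type} (O : PartialOrder α) : PartialOrder α where
  le a b := O.le b a
  lt a b := O.le b a ∧ ¬ O.le a b
  lt_iff_le_not_ge := fun _ _ => Iff.rfl
  le_refl a := O.le_refl a
  le_trans a b c h h' := O.le_trans c b a h' h
  le_antisymm a b h h' := O.le_antisymm a b h' h

/-- The relation of the hybrid sum `Q <_x P`, where `P` lives on `α` (the `inl`
component), `Q` lives on `β` (the `inr` component), and `x : α` is a (minimal)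
element of `P`: every element of `Q` is below every element of `P` except `x`,
and `x` is incomparable to all of `Q`.  (For `x` minimal, `¬ a ≤ x ↔ a ≠ x`.) -/
def hybLE {α β : Type} (O : PartialOrder α) (O' : PartialOrder β) (x : α) :
    α ⊕ β → α ⊕ β → Prop
  | .inl a, .inl a' => O.le a a'
  | .inr b, .inr b' => O'.le b b'
  | .inr _, .inl a => ¬ O.le a x
  | .inl _, .inr _ => False

/-- The hybrid sum `Q <_x P`. -/
def hybOrder {α β : Type} (O : PartialOrder α) (O' : PartialOrder β) (x : α) :
    PartialOrder (α ⊕ β) where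
  le := hybLE O O' x
  lt a b := hybLE O O' x a b ∧ ¬ hybLE O O' x b a
  lt_iff_le_not_ge := fun _ _ => Iff.rfl
  le_refl := by
    rintro (a | b)
    · exact O.le_refl a
    · exact O'.le_refl b
  le_trans := by
    rintro (a | a) (b | b) (c | c) h h' <;>
      first
        | exact h.elim
        | exact h'.elim
        | exact h'
        | exact O.le_trans _ _ _ h h'
        | exact O'.le_trans _ _ _ h h'
        | exact fun hc => h (O.le_trans _ _ _ h' hc)
  le_antisymm := by
    rintro (a | a) (b | b) h h' <;>
      first
        | exact h.elim
        | exact h'.elim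
        | exact congrArg Sum.inl (O.le_antisymm _ _ h h')
        | exact congrArg Sum.inr (O'.le_antisymm _ _ h h')

/-- The carrier of the flip-flop poset built from `P` on `α` (with `x` removed),
`Q` on `β` (with `y` removed), and the two extra elements `z = Sum.inr false`
and `v = Sum.inr true`. -/
abbrev FlipCarrier (α β : Type) (x : α) (y : β) : Type :=
  ({a : α // a ≠ x} ⊕ {b : β // b ≠ y}) ⊕ Bool

/-- The relation of the flip-flop poset: the dual order on `P − x`, the order on
`Q − y`; `p ≺ z` for `p` with `x ≺ p` in `P`; `z ≺ q` for `q` with `y ≺ q` in `Q`;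
`p ≺ v ≺ q` for all `p ∈ P − x`, `q ∈ Q − y`; and `z, v` incomparable. -/
def ffLE {α β : Type} (O : PartialOrder α) (O' : PartialOrder β) (x : α) (y : β) :
    FlipCarrier α β x y → FlipCarrier α β x y → Prop
  | .inl (.inl p), .inl (.inl p') => O.le p'.1 p.1
  | .inl (.inr q), .inl (.inr q') => O'.le q.1 q'.1
  | .inl (.inl _), .inl (.inr _) => True
  | .inl (.inr _), .inl (.inl _) => False
  | .inl (.inl _), .inr true => True
  | .inl (.inl p), .inr false => O.le x p.1
  | .inr true, .inl (.inr _) => True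
  | .inr false, .inl (.inr q) => O'.le y q.1
  | .inl (.inr _), .inr _ => False
  | .inr _, .inl (.inl _) => False
  | .inr c, .inr c' => c = c'

/-- The flip-flop poset. -/
def ffOrder {α β : Type} (O : PartialOrder α) (O' : PartialOrder β) (x : α) (y : β) :
    PartialOrder (FlipCarrier α β x y) where
  le := ffLE O O' x y
  lt a b := ffLE O O' x y a b ∧ ¬ ffLE O O' x y b a
  lt_iff_le_not_ge := fun _ _ => Iff.rfl
  le_refl := by
    rintro ((p | q) | (_ | _)) <;>
      first
        | exact O.le_refl _
        | exact O'.le_refl _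
        | rfl
  le_trans := by
    rintro ((p | q) | (_ | _)) ((p' | q') | (_ | _)) ((p'' | q'') | (_ | _)) h h' <;>
      first
        | trivial
        | exact h.elim
        | exact h'.elim
        | exact O.le_trans _ _ _ h' h
        | exact O'.le_trans _ _ _ h h'
        | exact O.le_trans _ _ _ h h'
        | exact O'.le_trans _ _ _ h' h
        | simp_all
  le_antisymm := by
    rintro ((p | q) | (_ | _)) ((p' | q') | (_ | _)) h h' <;>
      first
        | exact h.elim
        | exact h'.elim
        | rfl
        | exact congrArg (fun t => Sum.inl (Sum.inl t)) (Subtype.ext (O.le_antisymm _ _ h' h))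
        | exact congrArg (fun t => Sum.inl (Sum.inr t)) (Subtype.ext (O'.le_antisymm _ _ h h'))
        | exact Bool.noConfusion h
        | simp_all

/-- The value of the simple continued fraction `[b₀; b₁, …, b_m]`. -/
def cfVal : List ℕ → ℚ
  | [] => 0
  | [b] => (b : ℚ)
  | b :: l => (b : ℚ) + (cfVal l)⁻¹

/-- `l = [b₀, b₁, …, b_m]` is an admissible simple continued fraction expansion:
nonempty, `b₁, …, b_m ≥ 1`, and the last quotient is `≥ 2` when `m ≥ 1`.
(Such an expansion exists and is unique for every nonnegative rational.) -/
def cfAdmissible (l : List ℕ) : Prop :=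
  l ≠ [] ∧ (∀ i : Fin l.length, 0 < i.1 → 1 ≤ l.get i) ∧
    (2 ≤ l.length → ∀ b ∈ l.getLast?, 2 ≤ b)

/-- `gcfAux a b m k` is the value of the tail
`[a_{i+1}, …, a_m ; b_i, …, b_m]` of the generalized continued fraction, where
`i = m - k`; thus `gcfAux a b m m = b₀ + a₁/(b₁ + a₂/(b₂ + ⋯ + a_m/b_m))`. -/
def gcfAux (a b : ℕ → ℕ) (m : ℕ) : ℕ → ℚ
  | 0 => (b m : ℚ)
  | k + 1 => (b (m - (k + 1)) : ℚ) + (a (m - k) : ℚ) / gcfAux a b m k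

/-- The numerators `C_i` of the generalized continued fraction, indexed so that
`gcfC a b m k = C_{m-k}`: they satisfy `C_m = b_m`, `D_m = 1`, `D_i = C_{i+1}`,
`C_i = b_i D_i + a_{i+1} D_{i+1}`. -/
def gcfC (a b : ℕ → ℕ) (m : ℕ) : ℕ → ℕ
  | 0 => b m
  | 1 => b (m - 1) * b m + a m
  | k + 2 => b (m - (k + 2)) * gcfC a b m (k + 1) + a (m - (k + 1)) * gcfC a b m k

/-- The denominators `D_i`, indexed so that `gcfD a b m k = D_{m-k}`. -/
def gcfD (a b : ℕ → ℕ) (m : ℕ) : ℕ → ℕ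
  | 0 => 1
  | k + 1 => gcfC a b m k


/-! ### Auxiliary machinery for counting linear extensions -/

/-- The subtype of linear extensions of `(γ, O)`. -/
abbrev Exts {γ : Type} [Fintype γ] (O : PartialOrder γ) : Type :=
  {f : γ ≃ Fin (Fintype.card γ) // ∀ a b : γ, O.le a b → f a ≤ f b}

lemma eCount_eq_card (γ : Type) [Fintype γ] (O : PartialOrder γ) :
    eCount γ O = Nat.card (Exts O) := rfl

lemma card_ne_eq {α : Type} [Fintype α] [DecidableEq α] (x : α) :
    Fintype.card {a : α // a ≠ x} = Fintype.card α - 1 := by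
  have : Fintype.card {a : α // a = x} = 1 := Fintype.card_subtype_eq x
  have h := Fintype.card_subtype_compl (fun a : α => a = x)
  rw [this] at h
  exact h

/-- Build a linear extension from an injective monotone map. -/
noncomputable def mkExts {γ : Type} [Fintype γ] (O : PartialOrder γ)
    (u : γ → Fin (Fintype.card γ)) (hinj : Function.Injective u)
    (hmono : ∀ a b : γ, O.le a b → u a ≤ u b) : Exts O :=
  ⟨Equiv.ofBijective u ((Fintype.bijective_iff_injective_and_card u).mpr
      ⟨hinj, by simp⟩), hmono⟩

@[simp] lemma mkExts_apply {γ : Type} [Fintype γ] (O : PartialOrder γ)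
    (u : γ → Fin (Fintype.card γ)) (hinj : Function.Injective u)
    (hmono : ∀ a b : γ, O.le a b → u a ≤ u b) (a : γ) :
    (mkExts O u hinj hmono).1 a = u a := rfl

section Del

variable {α : Type} [Fintype α] [DecidableEq α] (O : PartialOrder α) (x : α)

lemma exts_ne_zero (F : Exts O) {a : α} (hFx : (F.1 x).val = 0) (ha : a ≠ x) :
    (F.1 a).val ≠ 0 := by
  intro h0
  exact ha (F.1.injective (Fin.ext (by rw [h0, hFx])))

/-- From an extension of `P` with `x` first, an extension of `P − x`. -/
noncomputable def delPhi (F : {f : Exts O // (f.1 x).val = 0}) :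
    Exts (delOrder O x) :=
  mkExts (delOrder O x) (fun a => ⟨(F.1.1 a.1).val - 1, by
      have h1 := exts_ne_zero O x F.1 F.2 a.2
      have h2 : (F.1.1 a.1).val < Fintype.card α := (F.1.1 a.1).2
      have hm : Fintype.card {a : α // a ≠ x} = Fintype.card α - 1 :=
        card_ne_eq x
      omega⟩)
    (by
      intro a b hab
      have h1 := exts_ne_zero O x F.1 F.2 a.2
      have h2 := exts_ne_zero O x F.1 F.2 b.2
      simp only [Fin.mk.injEq] at hab
      exact Subtype.ext (F.1.1.injective (Fin.ext (by omega))))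
    (by
      intro a b hab
      have := F.1.2 a.1 b.1 hab
      rw [Fin.le_def] at this
      exact Fin.mk_le_mk.mpr (Nat.sub_le_sub_right this 1))

/-- From an extension of `P − x`, an extension of `P` with `x` first. -/
noncomputable def delPsi (hx : isMinimal O x) (G : Exts (delOrder O x)) :
    {f : Exts O // (f.1 x).val = 0} :=
  ⟨mkExts O (fun a => if h : a = x then ⟨0, Fintype.card_pos_iff.mpr ⟨x⟩⟩
      else ⟨(G.1 ⟨a, h⟩).val + 1, by
        have := (G.1 ⟨a, h⟩).2
        have hm : Fintype.card {a : α // a ≠ x} = Fintype.card α - 1 :=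
          card_ne_eq x
        have hn : 0 < Fintype.card α := Fintype.card_pos_iff.mpr ⟨x⟩
        omega⟩)
    (by
      intro a b hab
      by_cases ha : a = x <;> by_cases hb : b = x <;>
        simp only [ha, hb, dif_pos, dif_neg, not_false_iff, Fin.mk.injEq] at hab ⊢
      · exact absurd hab (by omega)
      · exact absurd hab (by omega)
      · have : (⟨a, ha⟩ : {a : α // a ≠ x}) = ⟨b, hb⟩ :=
          G.1.injective (Fin.ext (by omega))
        exact congrArg Subtype.val this)
    (by
      intro a b hab
      by_cases ha : a = x
      · subst ha
        simp only [dif_pos]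
        exact Fin.mk_le_mk.mpr (Nat.zero_le _)
      · have hb : b ≠ x := fun hb => ha (hx a (hb ▸ hab))
        have := G.2 ⟨a, ha⟩ ⟨b, hb⟩ hab
        rw [Fin.le_def] at this
        simp only [dif_neg ha, dif_neg hb]
        exact Fin.mk_le_mk.mpr (by omega)), by simp⟩

/-- The extensions of `P` putting `x` first are in bijection with
extensions of `P − x`, when `x` is minimal. -/
lemma card_exts_val_zero (hx : isMinimal O x) :
    Nat.card {f : Exts O // (f.1 x).val = 0} = eDel α O x := by
  rw [eDel, eCount_eq_card]
  refine le_antisymm (Nat.card_le_card_of_injective (delPhi O x) ?_)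
    (Nat.card_le_card_of_injective (delPsi O x hx) ?_)
  · intro F F' h
    refine Subtype.ext (Subtype.ext (Equiv.ext fun a => Fin.ext ?_))
    by_cases ha : a = x
    · rw [ha, F.2, F'.2]
    · have := congrArg (fun G : Exts (delOrder O x) => (G.1 ⟨a, ha⟩).val) h
      simp only [delPhi, mkExts_apply] at this
      change (F.1.1 a).val - 1 = (F'.1.1 a).val - 1 at this
      have h1 := exts_ne_zero O x F.1 F.2 ha
      have h2 := exts_ne_zero O x F'.1 F'.2 ha
      omega
  · intro G G' h
    refine Subtype.ext (Equiv.ext fun a => Fin.ext ?_)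
    have := congrArg (fun F : {f : Exts O // (f.1 x).val = 0} =>
      (F.1.1 a.1).val) h
    simp only [delPsi, mkExts_apply, dif_neg a.2, Subtype.coe_eta] at this
    simp only [mkExts, Equiv.ofBijective_apply, dif_neg a.2, Subtype.coe_eta] at this
    omega

lemma eDel_le_eCount (hx : isMinimal O x) : eDel α O x ≤ eCount α O := by
  rw [← card_exts_val_zero O x hx, eCount_eq_card]
  exact Nat.card_le_card_of_injective Subtype.val Subtype.val_injective

end Del

section TSplit

variable {α : Type} [Fintype α] [DecidableEq α] (O : PartialOrder α) (x : α)

/-- Splitting the auxiliary index set. -/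
lemma card_T (hx : isMinimal O x) (k : ℕ) :
    Nat.card {p : Exts O × Fin (k + 1) // (p.1.1 x).val ≠ 0 → p.2 = Fin.last k} =
      eCount α O + k * eDel α O x := by
  have e : {p : Exts O × Fin (k + 1) // (p.1.1 x).val ≠ 0 → p.2 = Fin.last k} ≃
      (Exts O ⊕ ({f : Exts O // (f.1 x).val = 0} × Fin k)) :=
    { toFun := fun p => if h : p.1.2 = Fin.last k then .inl p.1.1
        else .inr (⟨p.1.1, by by_contra h0; exact h (p.2 h0)⟩,
          ⟨p.1.2.val, by have := Fin.val_lt_last h; omega⟩)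
      invFun := fun s => match s with
        | .inl f => ⟨(f, Fin.last k), fun _ => rfl⟩
        | .inr (f0, i) => ⟨(f0.1, i.castSucc), fun hne => absurd f0.2 hne⟩
      left_inv := by
        rintro ⟨⟨f, j⟩, hj⟩
        by_cases h : j = Fin.last k
        · simp only [dif_pos h]
          exact Subtype.ext (Prod.ext rfl h.symm)
        · simp only [dif_neg h]
          exact Subtype.ext (Prod.ext rfl (Fin.ext rfl))
      right_inv := by
        rintro (f | ⟨f0, i⟩)
        · simp
        · have h : (Fin.castSucc i) ≠ Fin.last k := ne_of_lt (Fin.castSucc_lt_last i)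
          simp only [dif_neg h]
          exact congrArg Sum.inr (Prod.ext (Subtype.ext rfl) (Fin.ext rfl)) }
  rw [Nat.card_congr e, Nat.card_sum, Nat.card_prod, card_exts_val_zero O x hx,
    Nat.card_eq_fintype_card (α := Fin k), Fintype.card_fin, eCount_eq_card]
  ring

end TSplit

/-- `eCount` is invariant under order isomorphism. -/
lemma eCount_congr {γ δ : Type} [Fintype γ] [Fintype δ]
    (Oγ : PartialOrder γ) (Oδ : PartialOrder δ) (e : γ ≃ δ)
    (he : ∀ a b : γ, Oγ.le a b ↔ Oδ.le (e a) (e b)) :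
    eCount γ Oγ = eCount δ Oδ := by
  have hc : Fintype.card γ = Fintype.card δ := Fintype.card_congr e
  rw [eCount_eq_card, eCount_eq_card]
  apply Nat.card_congr
  refine ⟨fun F => ⟨(e.symm.trans F.1).trans (finCongr hc), ?_⟩,
          fun G => ⟨(e.trans G.1).trans (finCongr hc.symm), ?_⟩, ?_, ?_⟩
  · intro a b hab
    have h2 := F.2 (e.symm a) (e.symm b) ((he _ _).mpr (by
      rwa [Equiv.apply_symm_apply, Equiv.apply_symm_apply]))
    simp only [Equiv.trans_apply, finCongr_apply, Fin.le_def, Fin.coe_cast]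
    exact Fin.le_def.mp h2
  · intro a b hab
    have h2 := G.2 (e a) (e b) ((he a b).mp hab)
    simp only [Equiv.trans_apply, finCongr_apply, Fin.le_def, Fin.coe_cast]
    exact Fin.le_def.mp h2
  · intro F
    refine Subtype.ext (Equiv.ext fun a => Fin.ext ?_)
    simp only [Equiv.trans_apply, finCongr_apply, Fin.coe_cast,
      Equiv.symm_apply_apply]
  · intro G
    refine Subtype.ext (Equiv.ext fun a => Fin.ext ?_)
    simp only [Equiv.trans_apply, finCongr_apply, Fin.coe_cast,
      Equiv.apply_symm_apply]

/-- Removing `y ∈ Q` from the hybrid sum `Q <_x P` gives the hybrid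
sum `(Q − y) <_x P`. -/
lemma eDel_hyb (α β : Type) [Fintype α] [Fintype β] [DecidableEq α]
    [DecidableEq β] (O : PartialOrder α) (O' : PartialOrder β) (x : α) (y : β) :
    eDel (α ⊕ β) (hybOrder O O' x) (Sum.inr y) =
      eCount (α ⊕ {b : β // b ≠ y}) (hybOrder O (delOrder O' y) x) := by
  rw [eDel]
  refine eCount_congr _ _
    ⟨fun z => match z with
      | ⟨.inl a, _⟩ => .inl a
      | ⟨.inr b, h⟩ => .inr ⟨b, fun hby => h (by rw [hby])⟩,
     fun s => match s with
      | .inl a => ⟨.inl a, by simp⟩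
      | .inr b => ⟨.inr b.1, by simpa using b.2⟩, ?_, ?_⟩ ?_
  · rintro ⟨(a | b), h⟩ <;> rfl
  · rintro (a | ⟨b, hb⟩) <;> rfl
  · rintro ⟨(a | b), hz⟩ ⟨(a' | b'), hz'⟩ <;> exact Iff.rfl

section Hyb

variable {α β : Type} [Fintype α] [Fintype β] [DecidableEq α] [DecidableEq β]
  (O : PartialOrder α) (O' : PartialOrder β) (x : α)

lemma card_sum' : Fintype.card (α ⊕ β) = Fintype.card α + Fintype.card β :=
  Fintype.card_sum

/-- The reassembly map: from extensions of `Q`, of `P`, and the position of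
`x` within the `Q`-block, build the underlying function of an extension of
`Q <_x P`. -/
noncomputable def hybU (G : Exts O') (F : Exts O) (j : Fin (Fintype.card β + 1))
    (z : α ⊕ β) : Fin (Fintype.card (α ⊕ β)) :=
  match z with
  | .inl a =>
      if (F.1 a).val = 0 then
        ⟨j.val, by
          have h1 : 0 < Fintype.card α := Fintype.card_pos_iff.mpr ⟨a⟩
          have h2 := j.2
          have h3 := card_sum' (α := α) (β := β)
          omega⟩
      else
        ⟨(F.1 a).val + Fintype.card β, by
          have h1 := (F.1 a).2
          have h3 := card_sum' (α := α) (β := β)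
          omega⟩
  | .inr b =>
      ⟨(G.1 b).val + (if j.val ≤ (G.1 b).val then 1 else 0), by
          have h1 := (G.1 b).2
          have h2 : 0 < Fintype.card α := Fintype.card_pos_iff.mpr ⟨x⟩
          have h3 := card_sum' (α := α) (β := β)
          by_cases h : j.val ≤ (G.1 b).val
          · rw [if_pos h]; omega
          · rw [if_neg h]; omega⟩

lemma hybU_inj (G : Exts O') (F : Exts O) (j : Fin (Fintype.card β + 1)) :
    Function.Injective (hybU O O' x G F j) := by
  have hj2 := j.2
  rintro (a | b) (a' | b') h <;> simp only [hybU] at h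
  · by_cases h1 : (F.1 a).val = 0 <;> by_cases h2 : (F.1 a').val = 0
    · exact congrArg Sum.inl (F.1.injective (Fin.ext (h1.trans h2.symm)))
    · rw [if_pos h1, if_neg h2] at h
      simp only [Fin.mk.injEq] at h
      omega
    · rw [if_neg h1, if_pos h2] at h
      simp only [Fin.mk.injEq] at h
      omega
    · rw [if_neg h1, if_neg h2] at h
      simp only [Fin.mk.injEq] at h
      exact congrArg Sum.inl (F.1.injective (Fin.ext (by omega)))
  · exfalso
    have hb := (G.1 b').2
    by_cases h1 : (F.1 a).val = 0
    · rw [if_pos h1] at h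
      simp only [Fin.mk.injEq] at h
      by_cases h2 : j.val ≤ (G.1 b').val
      · simp only [if_pos h2] at h; omega
      · simp only [if_neg h2] at h; omega
    · rw [if_neg h1] at h
      simp only [Fin.mk.injEq] at h
      by_cases h2 : j.val ≤ (G.1 b').val
      · simp only [if_pos h2] at h; omega
      · simp only [if_neg h2] at h; omega
  · exfalso
    have hb := (G.1 b).2
    by_cases h1 : (F.1 a').val = 0
    · rw [if_pos h1] at h
      simp only [Fin.mk.injEq] at h
      by_cases h2 : j.val ≤ (G.1 b).val
      · simp only [if_pos h2] at h; omega
      · simp only [if_neg h2] at h; omega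
    · rw [if_neg h1] at h
      simp only [Fin.mk.injEq] at h
      by_cases h2 : j.val ≤ (G.1 b).val
      · simp only [if_pos h2] at h; omega
      · simp only [if_neg h2] at h; omega
  · simp only [Fin.mk.injEq] at h
    have hbb : (G.1 b).val = (G.1 b').val := by
      by_cases h1 : j.val ≤ (G.1 b).val <;> by_cases h2 : j.val ≤ (G.1 b').val
      · simp only [if_pos h1, if_pos h2] at h; omega
      · simp only [if_pos h1, if_neg h2] at h; omega
      · simp only [if_neg h1, if_pos h2] at h; omega
      · simp only [if_neg h1, if_neg h2] at h; omega
    exact congrArg Sum.inr (G.1.injective (Fin.ext hbb))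

lemma hybU_mono (hx : isMinimal O x) (G : Exts O') (F : Exts O)
    (j : Fin (Fintype.card β + 1))
    (hj : (F.1 x).val ≠ 0 → j = Fin.last (Fintype.card β)) :
    ∀ z z' : α ⊕ β, (hybOrder O O' x).le z z' →
      hybU O O' x G F j z ≤ hybU O O' x G F j z' := by
  have hj2 := j.2
  rintro (a | b) (a' | b') h <;> simp only [hybU]
  · -- inl ≤ inl
    have hf := Fin.le_def.mp (F.2 a a' h)
    by_cases h1 : (F.1 a).val = 0 <;> by_cases h2 : (F.1 a').val = 0 <;>
      [rw [if_pos h1, if_pos h2]; rw [if_pos h1, if_neg h2];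
       rw [if_neg h1, if_pos h2]; rw [if_neg h1, if_neg h2]] <;>
      exact Fin.mk_le_mk.mpr (by omega)
  · exact h.elim
  · -- inr ≤ inl : h : ¬ O.le a' x
    have hane : a' ≠ x := fun e => h (e ▸ O.le_refl x)
    have hgb := (G.1 b).2
    by_cases h1 : (F.1 a').val = 0
    · have hxne : (F.1 x).val ≠ 0 := by
        intro h0
        exact hane (F.1.injective (Fin.ext (by omega)))
      have hjl : j.val = Fintype.card β := by rw [hj hxne]; rfl
      rw [if_pos h1]
      refine Fin.mk_le_mk.mpr ?_
      by_cases h2 : j.val ≤ (G.1 b).val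
      · simp only [if_pos h2]; omega
      · simp only [if_neg h2]; omega
    · rw [if_neg h1]
      have hf1 : (F.1 a').val ≠ 0 := h1
      refine Fin.mk_le_mk.mpr ?_
      by_cases h2 : j.val ≤ (G.1 b).val
      · simp only [if_pos h2]; omega
      · simp only [if_neg h2]; omega
  · -- inr ≤ inr
    have hg := Fin.le_def.mp (G.2 b b' h)
    refine Fin.mk_le_mk.mpr ?_
    by_cases h1 : j.val ≤ (G.1 b).val <;> by_cases h2 : j.val ≤ (G.1 b').val
    · simp only [if_pos h1, if_pos h2]; omega
    · simp only [if_pos h1, if_neg h2]; omega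
    · simp only [if_neg h1, if_pos h2]; omega
    · simp only [if_neg h1, if_neg h2]; omega

lemma hybU_val_inl (G : Exts O') (F : Exts O) (j : Fin (Fintype.card β + 1))
    (a : α) :
    (hybU O O' x G F j (Sum.inl a)).val =
      if (F.1 a).val = 0 then j.val else (F.1 a).val + Fintype.card β := by
  simp only [hybU]
  by_cases h : (F.1 a).val = 0
  · rw [if_pos h, if_pos h]
  · rw [if_neg h, if_neg h]

lemma hybU_val_inr (G : Exts O') (F : Exts O) (j : Fin (Fintype.card β + 1))
    (b : β) :
    (hybU O O' x G F j (Sum.inr b)).val =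
      (G.1 b).val + (if j.val ≤ (G.1 b).val then 1 else 0) := rfl

/-- The index type for the decomposition of extensions of the hybrid sum. -/
abbrev HybT (O : PartialOrder α) (O' : PartialOrder β) (x : α) : Type :=
  Exts O' × {p : Exts O × Fin (Fintype.card β + 1) //
    (p.1.1 x).val ≠ 0 → p.2 = Fin.last (Fintype.card β)}

/-- The reassembly map as a map into extensions of the hybrid sum. -/
noncomputable def hybB (hx : isMinimal O x) (P : HybT O O' x) :
    Exts (hybOrder O O' x) :=
  mkExts (hybOrder O O' x) (hybU O O' x P.1 P.2.1.1 P.2.1.2)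
    (hybU_inj O O' x P.1 P.2.1.1 P.2.1.2)
    (hybU_mono O O' x hx P.1 P.2.1.1 P.2.1.2 P.2.2)

lemma hybB_apply (hx : isMinimal O x) (P : HybT O O' x) (z : α ⊕ β) :
    (hybB O O' x hx P).1 z = hybU O O' x P.1 P.2.1.1 P.2.1.2 z := rfl

end Hyb

set_option maxHeartbeats 2000000 in
/-- The main counting identity: `e(Q <_x P) = e(Q)·(e(P) + |Q|·e(P−x))`. -/
lemma hyb_count {α β : Type} [Fintype α] [Fintype β] [DecidableEq α]
    [DecidableEq β] (O : PartialOrder α) (O' : PartialOrder β) (x : α)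
    (hx : isMinimal O x) :
    eCount (α ⊕ β) (hybOrder O O' x) =
      eCount β O' * (eCount α O + Fintype.card β * eDel α O x) := by
  have hN := card_sum' (α := α) (β := β)
  have hn : 0 < Fintype.card α := Fintype.card_pos_iff.mpr ⟨x⟩
  rw [eCount_eq_card, eCount_eq_card, ← card_T O x hx (Fintype.card β),
    ← Nat.card_prod]
  symm
  refine Nat.card_eq_of_bijective (hybB O O' x hx) ⟨?_, ?_⟩
  · -- injectivity of the reassembly map
    rintro ⟨G, ⟨⟨F, j⟩, hj⟩⟩ ⟨G', ⟨⟨F', j'⟩, hj'⟩⟩ h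
    have hz : ∀ z, hybU O O' x G F j z = hybU O O' x G' F' j' z :=
      fun z => congrArg (fun E : Exts (hybOrder O O' x) => E.1 z) h
    have hj2 := j.2
    have hj2' := j'.2
    have hFzero : ∀ a : α, ((F.1 a).val = 0 ↔ (F'.1 a).val = 0) := by
      intro a
      have hza := hz (.inl a)
      simp only [hybU] at hza
      by_cases h1 : (F.1 a).val = 0 <;> by_cases h2 : (F'.1 a).val = 0
      · exact iff_of_true h1 h2
      · rw [if_pos h1, if_neg h2] at hza
        simp only [Fin.mk.injEq] at hza
        have := (F'.1 a).2
        exact absurd hza (by omega)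
      · rw [if_neg h1, if_pos h2] at hza
        simp only [Fin.mk.injEq] at hza
        have := (F.1 a).2
        exact absurd hza (by omega)
      · exact iff_of_false h1 h2
    have hFF : F = F' := by
      refine Subtype.ext (Equiv.ext fun a => Fin.ext ?_)
      by_cases h1 : (F.1 a).val = 0
      · rw [h1, (hFzero a).mp h1]
      · have h2 : (F'.1 a).val ≠ 0 := fun hh => h1 ((hFzero a).mpr hh)
        have hza := hz (.inl a)
        simp only [hybU] at hza
        rw [if_neg h1, if_neg h2] at hza
        simp only [Fin.mk.injEq] at hza
        omega
    have hjj : j = j' := by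
      have h0 : (F.1 (F.1.symm ⟨0, hn⟩)).val = 0 := by
        rw [Equiv.apply_symm_apply]
      have h0' : (F'.1 (F.1.symm ⟨0, hn⟩)).val = 0 := (hFzero _).mp h0
      have hza := hz (.inl (F.1.symm ⟨0, hn⟩))
      simp only [hybU] at hza
      rw [if_pos h0, if_pos h0'] at hza
      simp only [Fin.mk.injEq] at hza
      exact Fin.ext hza
    have hGG : G = G' := by
      refine Subtype.ext (Equiv.ext fun b => Fin.ext ?_)
      have hzb := hz (.inr b)
      simp only [hybU] at hzb
      simp only [Fin.mk.injEq] at hzb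
      rw [← hjj] at hzb
      by_cases h1 : j.val ≤ (G.1 b).val <;> by_cases h2 : j.val ≤ (G'.1 b).val
      · simp only [if_pos h1, if_pos h2] at hzb; omega
      · simp only [if_pos h1, if_neg h2] at hzb; omega
      · simp only [if_neg h1, if_pos h2] at hzb; omega
      · simp only [if_neg h1, if_neg h2] at hzb; omega
    exact Prod.ext hGG (Subtype.ext (Prod.ext hFF hjj))
  · -- surjectivity of the reassembly map
    intro E
    have hinj := E.1.injective
    have h3 : ∀ (b : β) (a : α), a ≠ x → E.1 (Sum.inr b) < E.1 (Sum.inl a) := by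
      intro b a ha
      refine lt_of_le_of_ne
        (E.2 _ _ (show ¬ O.le a x from fun hax => ha (hx a hax)))
        (fun e => Sum.inr_ne_inl (hinj e))
    have h1 : ∀ b, (E.1 (Sum.inr b)).val ≤ Fintype.card β := by
      intro b
      have hsub : Finset.image (fun a : {a : α // a ≠ x} => E.1 (Sum.inl a.1))
          Finset.univ ⊆ Finset.Ioi (E.1 (Sum.inr b)) := by
        intro i hi
        simp only [Finset.mem_image, Finset.mem_univ, true_and] at hi
        obtain ⟨a, rfl⟩ := hi
        exact Finset.mem_Ioi.mpr (h3 b a.1 a.2)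
      have hc := Finset.card_le_card hsub
      rw [Finset.card_image_of_injective _
          (fun a a' e => Subtype.ext (Sum.inl.inj (hinj e))),
        Finset.card_univ, card_ne_eq, Fin.card_Ioi] at hc
      have hv := (E.1 (Sum.inr b)).2
      omega
    have h2 : ∀ a : α, a ≠ x → Fintype.card β ≤ (E.1 (Sum.inl a)).val := by
      intro a ha
      have hsub : Finset.image (fun b : β => E.1 (Sum.inr b)) Finset.univ ⊆
          Finset.Iio (E.1 (Sum.inl a)) := by
        intro i hi
        simp only [Finset.mem_image, Finset.mem_univ, true_and] at hi
        obtain ⟨b, rfl⟩ := hi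
        exact Finset.mem_Iio.mpr (h3 b a ha)
      have hc := Finset.card_le_card hsub
      rw [Finset.card_image_of_injective _ (fun b b' e => Sum.inr.inj (hinj e)),
        Finset.card_univ, Fin.card_Iio] at hc
      exact hc
    have h6 : ∀ a a' : α, (E.1 (Sum.inl a)).val ≤ Fintype.card β →
        (E.1 (Sum.inl a')).val ≤ Fintype.card β → a = a' := by
      intro a a' ha ha'
      by_contra hne
      have hk1 : Fintype.card β < Fintype.card (α ⊕ β) := by omega
      have hni1 : E.1 (Sum.inl a') ∉
          Finset.image (fun b : β => E.1 (Sum.inr b)) Finset.univ := by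
        simp only [Finset.mem_image, Finset.mem_univ, true_and, not_exists]
        exact fun b e => Sum.inr_ne_inl (hinj e)
      have hni2 : E.1 (Sum.inl a) ∉ insert (E.1 (Sum.inl a'))
          (Finset.image (fun b : β => E.1 (Sum.inr b)) Finset.univ) := by
        simp only [Finset.mem_insert, Finset.mem_image, Finset.mem_univ,
          true_and, not_or, not_exists]
        exact ⟨fun e => hne (Sum.inl.inj (hinj e)),
          fun b e => Sum.inr_ne_inl (hinj e)⟩
      have hsub : insert (E.1 (Sum.inl a)) (insert (E.1 (Sum.inl a'))
          (Finset.image (fun b : β => E.1 (Sum.inr b)) Finset.univ)) ⊆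
          Finset.Iic (⟨Fintype.card β, hk1⟩ : Fin (Fintype.card (α ⊕ β))) := by
        intro i hi
        simp only [Finset.mem_insert, Finset.mem_image, Finset.mem_univ,
          true_and] at hi
        rcases hi with rfl | rfl | ⟨b, rfl⟩
        · exact Finset.mem_Iic.mpr (Fin.le_def.mpr ha)
        · exact Finset.mem_Iic.mpr (Fin.le_def.mpr ha')
        · exact Finset.mem_Iic.mpr (Fin.le_def.mpr (h1 b))
      have hcard := Finset.card_le_card hsub
      rw [Finset.card_insert_of_notMem hni2, Finset.card_insert_of_notMem hni1,
        Finset.card_image_of_injective _ (fun b b' e => Sum.inr.inj (hinj e)),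
        Finset.card_univ, Fin.card_Iic] at hcard
      have hmk : ((⟨Fintype.card β, hk1⟩ : Fin (Fintype.card (α ⊕ β)))).val =
        Fintype.card β := rfl
      omega
    have h7 : ∃ a : α, (E.1 (Sum.inl a)).val ≤ Fintype.card β := by
      by_contra h7
      push_neg at h7
      have hk1 : Fintype.card β < Fintype.card (α ⊕ β) := by omega
      have hsub : Finset.image (fun a : α => E.1 (Sum.inl a)) Finset.univ ⊆
          Finset.Ioi (⟨Fintype.card β, hk1⟩ : Fin (Fintype.card (α ⊕ β))) := by
        intro i hi
        simp only [Finset.mem_image, Finset.mem_univ, true_and] at hi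
        obtain ⟨a, rfl⟩ := hi
        exact Finset.mem_Ioi.mpr (Fin.lt_def.mpr (h7 a))
      have hc := Finset.card_le_card hsub
      rw [Finset.card_image_of_injective _ (fun a a' e => Sum.inl.inj (hinj e)),
        Finset.card_univ, Fin.card_Ioi] at hc
      have hmk : ((⟨Fintype.card β, hk1⟩ : Fin (Fintype.card (α ⊕ β)))).val =
        Fintype.card β := rfl
      omega
    set jv := min (E.1 (Sum.inl x)).val (Fintype.card β) with hjv
    have hjk : jv ≤ Fintype.card β := by rw [hjv]; omega
    have hjl : (E.1 (Sum.inl x)).val ≤ Fintype.card β →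
        jv = (E.1 (Sum.inl x)).val := by rw [hjv]; omega
    have hjr : ¬ ((E.1 (Sum.inl x)).val ≤ Fintype.card β) →
        jv = Fintype.card β := by rw [hjv]; omega
    have hne_b : ∀ b, (E.1 (Sum.inr b)).val ≠ jv := by
      intro b hb
      by_cases hxv : (E.1 (Sum.inl x)).val ≤ Fintype.card β
      · have he : E.1 (Sum.inr b) = E.1 (Sum.inl x) :=
          Fin.ext (by rw [hb, hjl hxv])
        exact Sum.inr_ne_inl (hinj he)
      · obtain ⟨a0, ha0⟩ := h7
        have hax : a0 ≠ x := fun e => hxv (e ▸ ha0)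
        have h2a := h2 a0 hax
        have he : E.1 (Sum.inr b) = E.1 (Sum.inl a0) :=
          Fin.ext (by have := hjr hxv; omega)
        exact Sum.inr_ne_inl (hinj he)
    set g : β → Fin (Fintype.card β) := fun b =>
      ⟨(E.1 (Sum.inr b)).val - (if jv < (E.1 (Sum.inr b)).val then 1 else 0), by
        have h1b := h1 b
        have h2b := hne_b b
        by_cases h : jv < (E.1 (Sum.inr b)).val
        · simp only [if_pos h]; omega
        · simp only [if_neg h]; omega⟩ with hgdef
    set f : α → Fin (Fintype.card α) := fun a =>
      ⟨if (E.1 (Sum.inl a)).val ≤ Fintype.card β then 0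
        else (E.1 (Sum.inl a)).val - Fintype.card β, by
        have := (E.1 (Sum.inl a)).2
        by_cases h : (E.1 (Sum.inl a)).val ≤ Fintype.card β
        · simp only [if_pos h]; omega
        · simp only [if_neg h]; omega⟩ with hfdef
    have hgval : ∀ b, (g b).val = (E.1 (Sum.inr b)).val -
        (if jv < (E.1 (Sum.inr b)).val then 1 else 0) := fun b => rfl
    have hfval : ∀ a, (f a).val = if (E.1 (Sum.inl a)).val ≤ Fintype.card β
        then 0 else (E.1 (Sum.inl a)).val - Fintype.card β := fun a => rfl
    have hginj : Function.Injective g := by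
      intro b b' e
      have e' := congrArg Fin.val e
      rw [hgval, hgval] at e'
      have hb1 := hne_b b
      have hb2 := hne_b b'
      have hb3 := h1 b
      have hb4 := h1 b'
      refine Sum.inr.inj (hinj (Fin.ext ?_))
      by_cases c1 : jv < (E.1 (Sum.inr b)).val <;>
        by_cases c2 : jv < (E.1 (Sum.inr b')).val
      · simp only [if_pos c1, if_pos c2] at e'; omega
      · simp only [if_pos c1, if_neg c2] at e'; omega
      · simp only [if_neg c1, if_pos c2] at e'; omega
      · simp only [if_neg c1, if_neg c2] at e'; omega
    have hgmono : ∀ b b' : β, O'.le b b' → g b ≤ g b' := by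
      intro b b' hbb'
      have hE := Fin.le_def.mp (E.2 (Sum.inr b) (Sum.inr b') hbb')
      rw [Fin.le_def, hgval, hgval]
      by_cases c1 : jv < (E.1 (Sum.inr b)).val <;>
        by_cases c2 : jv < (E.1 (Sum.inr b')).val
      · simp only [if_pos c1, if_pos c2]; omega
      · simp only [if_pos c1, if_neg c2]; omega
      · simp only [if_neg c1, if_pos c2]; omega
      · simp only [if_neg c1, if_neg c2]; omega
    have hfinj : Function.Injective f := by
      intro a a' e
      have e' := congrArg Fin.val e
      rw [hfval, hfval] at e'
      by_cases c1 : (E.1 (Sum.inl a)).val ≤ Fintype.card β <;>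
        by_cases c2 : (E.1 (Sum.inl a')).val ≤ Fintype.card β
      · exact h6 a a' c1 c2
      · simp only [if_pos c1, if_neg c2] at e'
        exact absurd e' (by omega)
      · simp only [if_neg c1, if_pos c2] at e'
        exact absurd e' (by omega)
      · simp only [if_neg c1, if_neg c2] at e'
        exact Sum.inl.inj (hinj (Fin.ext (by omega)))
    have hfmono : ∀ a a' : α, O.le a a' → f a ≤ f a' := by
      intro a a' haa'
      have hE := Fin.le_def.mp (E.2 (Sum.inl a) (Sum.inl a') haa')
      rw [Fin.le_def, hfval, hfval]
      by_cases c1 : (E.1 (Sum.inl a)).val ≤ Fintype.card β <;>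
        by_cases c2 : (E.1 (Sum.inl a')).val ≤ Fintype.card β
      · simp only [if_pos c1, if_pos c2]; omega
      · simp only [if_pos c1, if_neg c2]; omega
      · simp only [if_neg c1, if_pos c2]; omega
      · simp only [if_neg c1, if_neg c2]; omega
    have hjlt : jv < Fintype.card β + 1 := by omega
    have hcon : (((mkExts O f hfinj hfmono).1) x).val ≠ 0 →
        (⟨jv, hjlt⟩ : Fin (Fintype.card β + 1)) = Fin.last (Fintype.card β) := by
      intro hxx
      rw [mkExts_apply, hfval] at hxx
      by_cases hxv : (E.1 (Sum.inl x)).val ≤ Fintype.card β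
      · rw [if_pos hxv] at hxx
        exact absurd rfl hxx
      · exact Fin.ext (by rw [Fin.val_last]; exact hjr hxv)
    refine ⟨(mkExts O' g hginj hgmono,
      ⟨(mkExts O f hfinj hfmono, ⟨jv, hjlt⟩), hcon⟩), ?_⟩
    refine Subtype.ext (Equiv.ext fun z => ?_)
    rcases z with a | b
    · rw [hybB_apply]
      refine Fin.ext ?_
      rw [hybU_val_inl]
      simp only [mkExts_apply, hfval]
      by_cases c1 : (E.1 (Sum.inl a)).val ≤ Fintype.card β
      · rw [if_pos c1, if_pos rfl]
        show jv = (E.1 (Sum.inl a)).val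
        by_cases hax : a = x
        · subst hax
          exact hjl c1
        · have h2a := h2 a hax
          have hxv : ¬ ((E.1 (Sum.inl x)).val ≤ Fintype.card β) :=
            fun hxv => hax (h6 a x c1 hxv)
          have := hjr hxv
          omega
      · rw [if_neg c1,
          if_neg (show ¬ ((E.1 (Sum.inl a)).val - Fintype.card β = 0) by omega)]
        omega
    · rw [hybB_apply]
      refine Fin.ext ?_
      rw [hybU_val_inr]
      simp only [mkExts_apply, hgval]
      have h1b := h1 b
      have h2b := hne_b b
      show (E.1 (Sum.inr b)).val -
          (if jv < (E.1 (Sum.inr b)).val then 1 else 0) +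
        (if jv ≤ (E.1 (Sum.inr b)).val -
          (if jv < (E.1 (Sum.inr b)).val then 1 else 0) then 1 else 0) =
        (E.1 (Sum.inr b)).val
      by_cases c1 : jv < (E.1 (Sum.inr b)).val
      · rw [if_pos c1, if_pos (show jv ≤ (E.1 (Sum.inr b)).val - 1 by omega)]
        omega
      · rw [if_neg c1,
          if_neg (show ¬ (jv ≤ (E.1 (Sum.inr b)).val - 0) by omega)]
        omega

/-- For the hybrid sum `R = Q <_x P` with `z = y`,
`ρ(R,z) = ρ(Q,y)·(1 + 1/(n' − 1 + ρ(P,x)))` where `ρ(S,s) = e(S)/e(S−s)` and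
`n' = |Q|`. -/
theorem hybrid_sum_rho (α β : Type) [Fintype α] [Fintype β]
    [DecidableEq α] [DecidableEq β]
    (O : PartialOrder α) (O' : PartialOrder β) (x : α) (hx : isMinimal O x)
    (y : β) (hy : isMinimal O' y)
    (hP : 0 < eDel α O x) (hQ : 0 < eDel β O' y) :
    (eCount (α ⊕ β) (hybOrder O O' x) : ℚ) /
        (eDel (α ⊕ β) (hybOrder O O' x) (Sum.inr y) : ℚ) =
      ((eCount β O' : ℚ) / (eDel β O' y : ℚ)) *
        (1 + 1 / ((Fintype.card β : ℚ) - 1 +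
          (eCount α O : ℚ) / (eDel α O x : ℚ))) := by
  have hk1 : 1 ≤ Fintype.card β := Fintype.card_pos_iff.mpr ⟨y⟩
  have hkm : Fintype.card {b : β // b ≠ y} = Fintype.card β - 1 := card_ne_eq y
  have hnum := hyb_count O O' x hx
  have hden : eDel (α ⊕ β) (hybOrder O O' x) (Sum.inr y) =
      eDel β O' y * (eCount α O + (Fintype.card β - 1) * eDel α O x) := by
    rw [eDel_hyb α β O O' x y, hyb_count O (delOrder O' y) x hx, hkm]
    rfl
  have hPP : 0 < eCount α O := lt_of_lt_of_le hP (eDel_le_eCount O x hx)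
  rw [hnum, hden]
  have he : (0:ℚ) < (eDel α O x : ℚ) := by exact_mod_cast hP
  have hq' : (0:ℚ) < (eDel β O' y : ℚ) := by exact_mod_cast hQ
  have hp : (0:ℚ) < (eCount α O : ℚ) := by exact_mod_cast hPP
  have hkQ : (1:ℚ) ≤ (Fintype.card β : ℚ) := by exact_mod_cast hk1
  push_cast [Nat.cast_sub hk1]
  have hD : (0:ℚ) < (eCount α O : ℚ) +
      ((Fintype.card β : ℚ) - 1) * (eDel α O x : ℚ) := by
    have h0 : (0:ℚ) ≤ ((Fintype.card β : ℚ) - 1) * (eDel α O x : ℚ) :=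
      mul_nonneg (by linarith) he.le
    linarith
  have hA : (0:ℚ) < (Fintype.card β : ℚ) - 1 +
      (eCount α O : ℚ) / (eDel α O x : ℚ) := by
    have h0 : 0 < (eCount α O : ℚ) / (eDel α O x : ℚ) := div_pos hp he
    linarith
  have hD2 : (0:ℚ) < (eCount α O : ℚ) +
      ((Fintype.card β : ℚ) * (eDel α O x : ℚ) - (eDel α O x : ℚ)) := by
    have h' : (eCount α O : ℚ) + ((Fintype.card β : ℚ) - 1) * (eDel α O x : ℚ)
        = (eCount α O : ℚ) +
          ((Fintype.card β : ℚ) * (eDel α O x : ℚ) - (eDel α O x : ℚ)) := by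
      ring
    linarith
  have key : (1:ℚ) + 1 / ((Fintype.card β : ℚ) - 1 +
      (eCount α O : ℚ) / (eDel α O x : ℚ)) =
      ((eCount α O : ℚ) + (Fintype.card β : ℚ) * (eDel α O x : ℚ)) /
        ((eCount α O : ℚ) + ((Fintype.card β : ℚ) - 1) * (eDel α O x : ℚ)) := by
    have hD3 : (-(eDel α O x : ℚ) + (eDel α O x : ℚ) * (Fintype.card β : ℚ) +
        (eCount α O : ℚ)) ≠ 0 := by
      have hring : (-(eDel α O x : ℚ) + (eDel α O x : ℚ) * (Fintype.card β : ℚ) +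
          (eCount α O : ℚ)) = (eCount α O : ℚ) +
          ((Fintype.card β : ℚ) - 1) * (eDel α O x : ℚ) := by ring
      rw [hring]
      exact hD.ne'
    rw [one_add_div hA.ne', div_eq_div_iff hA.ne' hD.ne']
    field_simp [he.ne']
    ring
  rw [key, div_mul_div_comm]
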